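/- Let Q be a connected Dynkin quiver (type A, D, or E) and a ≥ 2 an integer. The repetition quiver ZQ admits a combinatorial a-th root of the Auslander–Reiten translation τ (an automorphism F with F^a = τ^{-1}) if and only if a = 2 and Q is of type A_n with n even. -/

import Mathlib

/-!
An automorphism of `ℤQ` commuting with `τ` has the form `(p, v) ↦ (p + g v, σ v)`, where `σ`
is an automorphism of the underlying graph of `Q`. Its `a`-th power is `τ⁻¹` exactly when
`σ^a = id` and `g` sums to `1` along every length-`a` segment of a `σ`-orbit; as `a ≥ 2`,
this makes `σ` fixed-point free. In types `D` and `E` the unique branch vertex is fixed by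
every graph automorphism, so there is no root. In type `A_n` the only fixed-point-free
automorphism is the reversal, which requires `n` even; being an involution, it forces `a = 2`.
Conversely, for `n = 2m` the map `(p, i) ↦ (p + i + 1 - m, n - 1 - i)` squares to `τ⁻¹`.
-/

/-- The simply-laced Dynkin types: `A n` (`n ≥ 1` vertices), `D n` (`n ≥ 4` vertices),
`E 6`, `E 7`, `E 8`. -/
inductive DynkinType : Type
  | A : ℕ → DynkinType
  | D : ℕ → DynkinType
  | E6 : DynkinType
  | E7 : DynkinType
  | E8 : DynkinType

namespace DynkinType

/-- Validity of the parameters. -/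
def Valid : DynkinType → Prop
  | A n => 1 ≤ n
  | D n => 4 ≤ n
  | _ => True

/-- The number of vertices. -/
def card : DynkinType → ℕ
  | A n => n
  | D n => n
  | E6 => 6
  | E7 => 7
  | E8 => 8

/-- The arrow relation of a fixed orientation of each Dynkin diagram, on vertices
`0, …, card − 1`:
* type `A n`: the linear quiver `0 → 1 → ⋯ → n−1`;
* type `D n`: the chain `0 → 1 → ⋯ → n−2` together with the fork arrow `n−3 → n−1`;
* types `E m` (`m = 6,7,8`): the chain `0 → ⋯ → m−2` together with the branch `2 → m−1`. -/
def arrow (Δ : DynkinType) (u v : Fin Δ.card) : Prop :=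
  match Δ with
  | A _ => (v : ℕ) = (u : ℕ) + 1
  | D n => ((v : ℕ) = (u : ℕ) + 1 ∧ (v : ℕ) ≤ n - 2) ∨ ((u : ℕ) = n - 3 ∧ (v : ℕ) = n - 1)
  | E6 => ((v : ℕ) = (u : ℕ) + 1 ∧ (v : ℕ) ≤ 4) ∨ ((u : ℕ) = 2 ∧ (v : ℕ) = 5)
  | E7 => ((v : ℕ) = (u : ℕ) + 1 ∧ (v : ℕ) ≤ 5) ∨ ((u : ℕ) = 2 ∧ (v : ℕ) = 6)
  | E8 => ((v : ℕ) = (u : ℕ) + 1 ∧ (v : ℕ) ≤ 6) ∨ ((u : ℕ) = 2 ∧ (v : ℕ) = 7)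

end DynkinType

/-- The adjacency of the repetition quiver `ℤQ` of a quiver with arrow relation `arr` :
arrows `(p,u) → (p,v)` and `(p,v) → (p+1,u)` for each arrow `u → v` of `Q`. -/
def zqAdj {V : Type*} (arr : V → V → Prop) : (ℤ × V) → (ℤ × V) → Prop :=
  fun z w => (w.1 = z.1 ∧ arr z.2 w.2) ∨ (w.1 = z.1 + 1 ∧ arr w.2 z.2)

open Finset Function SimpleGraph

section Repetition

variable {V : Type*} {e : (ℤ × V) ≃ (ℤ × V)} {σ : V → V} {g : V → ℤ}

lemma commute_tau_iff_exists_apply_eq :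
    (∀ z : ℤ × V, e (z.1 - 1, z.2) = ((e z).1 - 1, (e z).2)) ↔
      ∃ (σ : V → V) (g : V → ℤ), ∀ p v, e (p, v) = (p + g v, σ v) := by
  constructor
  · refine fun htau => ⟨fun v => (e (0, v)).2, fun v => (e (0, v)).1, fun p v => ?_⟩
    induction p using Int.induction_on with
    | zero => simp
    | succ p ih =>
      have h := htau (p + 1, v)
      rw [add_sub_cancel_right, ih, Prod.ext_iff] at h
      exact Prod.ext (by simp only at h ⊢; linarith [h.1]) h.2.symm
    | pred p ih =>
      have h := htau (-p, v)
      rw [ih] at h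
      rw [h]
      ext <;> simp only; ring
  · rintro ⟨σ, g, he⟩ ⟨p, v⟩
    rw [he, he]
    ext <;> simp only; ring

variable (he : ∀ p v, e (p, v) = (p + g v, σ v))
include he

lemma injective_of_apply_eq : Injective σ := fun v w hvw => by
  have h : e (g w - g v, v) = e (0, w) := by rw [he, he, hvw]; ring_nf
  exact (Prod.ext_iff.mp (e.injective h)).2

lemma iterate_apply_eq (j : ℕ) (p : ℤ) (v : V) :
    e^[j] (p, v) = (p + ∑ i ∈ range j, g (σ^[i] v), σ^[j] v) := by
  induction j generalizing p with
  | zero => simp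
  | succ j ih =>
    rw [iterate_succ_apply', ih, he, sum_range_succ, iterate_succ_apply']
    ext <;> simp only; ring

lemma iterate_eq_tau_inv_iff {a : ℕ} :
    (∀ z : ℤ × V, e^[a] z = (z.1 + 1, z.2)) ↔
      ∀ v, σ^[a] v = v ∧ ∑ i ∈ range a, g (σ^[i] v) = 1 := by
  simp only [Prod.forall, iterate_apply_eq he, Prod.ext_iff, add_right_inj]
  exact ⟨fun h v => (h 0 v).symm, fun h p v => (h v).symm⟩

lemma fromRel_adj_apply_of_apply_eq {arr : V → V → Prop}
    (hadj : ∀ z w, zqAdj arr z w ↔ zqAdj arr (e z) (e w)) {u v : V}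
    (huv : (fromRel arr).Adj u v) : (fromRel arr).Adj (σ u) (σ v) := by
  have harr (u v : V) (h : arr u v) : arr (σ u) (σ v) ∨ arr (σ v) (σ u) := by
    have := (hadj (0, u) (0, v)).1 (Or.inl ⟨rfl, h⟩)
    rw [he, he] at this
    exact this.imp And.right And.right
  obtain ⟨hne, h⟩ := huv
  exact ⟨(injective_of_apply_eq he).ne hne, h.elim (harr u v) fun h => (harr v u h).symm⟩

end Repetition

def zqTwist {V : Type*} (σ : Equiv.Perm V) (g : V → ℤ) : (ℤ × V) ≃ (ℤ × V) :=
  (Equiv.prodComm ℤ V).trans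
    ((Equiv.prodShear σ fun v => Equiv.addRight (g v)).trans (Equiv.prodComm V ℤ))

lemma zqTwist_apply {V : Type*} (σ : Equiv.Perm V) (g : V → ℤ) (p : ℤ) (v : V) :
    zqTwist σ g (p, v) = (p + g v, σ v) := rfl

section Orbits

variable {V : Type*} {σ : V → V} {g : V → ℤ} {a : ℕ} {v : V}

lemma apply_ne_self_of_sum_iterate_eq_one (ha : 2 ≤ a)
    (hsum : ∑ i ∈ range a, g (σ^[i] v) = 1) : σ v ≠ v := by
  intro hv
  simp only [iterate_fixed hv, sum_const, card_range, nsmul_eq_mul] at hsum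
  have := Int.eq_one_of_mul_eq_one_right (Int.natCast_nonneg a) hsum
  omega

lemma Function.Involutive.sum_range_two_mul_iterate (hσ : Involutive σ) (b : ℕ) :
    ∑ i ∈ range (2 * b), g (σ^[i] v) = b * (g v + g (σ v)) := by
  induction b with
  | zero => simp
  | succ b ih =>
    rw [show 2 * (b + 1) = 2 * b + 1 + 1 by ring, sum_range_succ, sum_range_succ, ih,
      hσ.iterate_two_mul, hσ.iterate_two_mul_add_one, id_eq]
    push_cast
    ring

lemma Function.Involutive.eq_two_of_sum_iterate_eq_one (hσ : Involutive σ) (hv : σ v ≠ v)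
    (hper : σ^[a] v = v) (hsum : ∑ i ∈ range a, g (σ^[i] v) = 1) : a = 2 := by
  rcases a.even_or_odd with ⟨b, rfl⟩ | hodd
  · rw [← two_mul, hσ.sum_range_two_mul_iterate] at hsum
    have := Int.eq_one_of_mul_eq_one_right (Int.natCast_nonneg b) hsum
    omega
  · exact absurd (hσ.iterate_odd hodd ▸ hper) hv

end Orbits

lemma Fin.even_of_forall_rev_ne {n : ℕ} (h : ∀ i : Fin n, i.rev ≠ i) : Even n := by
  by_contra hodd
  obtain ⟨c, rfl⟩ := Nat.not_even_iff_odd.1 hodd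
  exact h ⟨c, by omega⟩ (Fin.ext (by rw [Fin.val_rev, Fin.val_mk]; omega))

namespace SimpleGraph

variable {W W' : Type*} {G : SimpleGraph W} {G' : SimpleGraph W'}

def IsBranchVertex (G : SimpleGraph W) (v : W) : Prop :=
  ∃ x y z, x ≠ y ∧ x ≠ z ∧ y ≠ z ∧ G.Adj v x ∧ G.Adj v y ∧ G.Adj v z

lemma IsBranchVertex.map {v : W} (f : G →g G') (hf : Injective f) :
    G.IsBranchVertex v → G'.IsBranchVertex (f v)
  | ⟨x, y, z, hxy, hxz, hyz, hx, hy, hz⟩ =>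
    ⟨f x, f y, f z, hf.ne hxy, hf.ne hxz, hf.ne hyz, f.map_adj hx, f.map_adj hy, f.map_adj hz⟩

def pathGraphRev (n : ℕ) : pathGraph n →g pathGraph n where
  toFun := Fin.rev
  map_rel' := by
    intro u v
    simp only [pathGraph_adj, Fin.val_rev]
    omega

lemma pathGraphRev_apply {n : ℕ} (i : Fin n) : pathGraphRev n i = i.rev := rfl

lemma pathGraph_hom_eq_id_of_step_up {n : ℕ} {f : pathGraph n →g pathGraph n}
    (hf : Injective f) (hup : ∀ h : 1 < n, (f ⟨1, h⟩ : ℕ) = f ⟨0, by omega⟩ + 1) :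
    ⇑f = id := by
  have step (k : ℕ) (hk : k + 1 < n) : (f ⟨k + 1, hk⟩ : ℕ) = f ⟨k, by omega⟩ + 1 := by
    induction k with
    | zero => exact hup hk
    | succ k ih =>
      have hadj := pathGraph_adj.1 <| f.map_adj <|
        (pathGraph_adj (u := ⟨k + 1, by omega⟩) (v := ⟨k + 1 + 1, hk⟩)).2 (Or.inl rfl)
      have hne := Fin.val_ne_of_ne <|
        hf.ne (a₁ := ⟨k + 1 + 1, hk⟩) (a₂ := ⟨k, by omega⟩)
          (by rw [ne_eq, Fin.mk.injEq]; omega)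
      have := ih (by omega)
      -- a step down would give `f (k + 2) = f k`
      omega
  have hval (k : ℕ) (hk : k < n) : (f ⟨k, hk⟩ : ℕ) = f ⟨0, by omega⟩ + k := by
    induction k with
    | zero => rfl
    | succ k ih => rw [step k hk, ih (by omega)]; rfl
  funext i
  have hi := i.isLt
  have hlast := hval (n - 1) (by omega)
  have := (f ⟨n - 1, by omega⟩).isLt
  ext
  rw [hval i hi, id_eq]
  omega

lemma pathGraph_hom_eq_id_or_rev {n : ℕ} {f : pathGraph n →g pathGraph n}
    (hf : Injective f) : ⇑f = id ∨ ⇑f = Fin.rev := by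
  rcases le_or_gt n 1 with hn | hn
  · have : Subsingleton (Fin n) := Fin.subsingleton_iff_le_one.2 hn
    exact Or.inl (Subsingleton.elim _ _)
  have h01 := pathGraph_adj.1 <| f.map_adj <|
    (pathGraph_adj (u := ⟨0, by omega⟩) (v := ⟨1, hn⟩)).2 (Or.inl rfl)
  rcases h01 with hup | hdown
  · exact Or.inl (pathGraph_hom_eq_id_of_step_up hf fun _ => hup.symm)
  · right
    -- after composing with the reversal, `f` steps up at `0`
    have hrev := pathGraph_hom_eq_id_of_step_up (f := (pathGraphRev n).comp f)
      (Fin.rev_injective.comp hf) fun _ => by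
        simp only [Hom.coe_comp, comp_apply, pathGraphRev_apply, Fin.val_rev]
        omega
    funext i
    exact Fin.rev_eq_iff.1 (congrFun hrev i)

end SimpleGraph

namespace DynkinType

def graph (Δ : DynkinType) : SimpleGraph (Fin Δ.card) := fromRel Δ.arrow

lemma graph_A_adj {n : ℕ} {u v : Fin n} : (A n).graph.Adj u v ↔ (pathGraph n).Adj u v := by
  change u ≠ v ∧ ((v : ℕ) = u + 1 ∨ (u : ℕ) = v + 1) ↔ _
  rw [pathGraph_adj, ne_eq, Fin.ext_iff]
  omega

lemma existsUnique_isBranchVertex {Δ : DynkinType} (hΔ : Δ.Valid) (hA : ∀ n, Δ ≠ A n) :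
    ∃! b, Δ.graph.IsBranchVertex b := by
  cases Δ with
  | A n => exact absurd rfl (hA n)
  | D n =>
    have hn : 4 ≤ n := hΔ
    refine ⟨⟨n - 3, by simp only [card]; omega⟩,
      ⟨⟨n - 4, by simp only [card]; omega⟩, ⟨n - 2, by simp only [card]; omega⟩,
        ⟨n - 1, by simp only [card]; omega⟩, ?_⟩, ?_⟩
    · simp only [graph, fromRel_adj, arrow, ne_eq, Fin.ext_iff, and_self, and_true, or_true,
        true_or]
      omega
    · rintro v ⟨x, y, z, hxy, hxz, hyz, hx, hy, hz⟩
      have hlt : (v : ℕ) < n ∧ (x : ℕ) < n ∧ (y : ℕ) < n ∧ (z : ℕ) < n :=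
        ⟨v.2, x.2, y.2, z.2⟩
      simp only [graph, fromRel_adj, arrow, ne_eq, Fin.ext_iff] at hx hy hz hxy hxz hyz ⊢
      omega
  | E6 | E7 | E8 =>
    -- `Fin.rev 0` is the last vertex, the end of the short branch
    refine ⟨⟨2, by decide⟩,
      ⟨⟨1, by decide⟩, ⟨3, by decide⟩, Fin.rev ⟨0, by decide⟩, ?_⟩, ?_⟩
    · simp only [graph, fromRel_adj, arrow, ne_eq, Fin.ext_iff, Fin.val_rev]
      decide
    · rintro v ⟨x, y, z, hxy, hxz, hyz, hx, hy, hz⟩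
      have hlt := And.intro v.2 (And.intro x.2 (And.intro y.2 z.2))
      simp only [card] at hlt
      simp only [graph, fromRel_adj, arrow, ne_eq, Fin.ext_iff] at hx hy hz hxy hxz hyz ⊢
      omega

lemma exists_zq_sqrt_tau_inv_A (m : ℕ) :
    ∃ e : (ℤ × Fin (A (m + m)).card) ≃ (ℤ × Fin (A (m + m)).card),
      (∀ z w, zqAdj (A (m + m)).arrow z w ↔ zqAdj (A (m + m)).arrow (e z) (e w)) ∧
      (∀ z : ℤ × Fin (A (m + m)).card, e (z.1 - 1, z.2) = ((e z).1 - 1, (e z).2)) ∧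
      (∀ z : ℤ × Fin (A (m + m)).card, e^[2] z = (z.1 + 1, z.2)) := by
  set g : Fin (A (m + m)).card → ℤ := fun i => (i : ℤ) + 1 - m with hg
  have he (p : ℤ) (i : Fin (A (m + m)).card) :
      zqTwist Fin.revPerm g (p, i) = (p + g i, i.rev) := zqTwist_apply _ _ _ _
  refine ⟨zqTwist Fin.revPerm g, ?_, commute_tau_iff_exists_apply_eq.2 ⟨_, _, he⟩,
    (iterate_eq_tau_inv_iff he).2 fun v => ⟨Fin.rev_rev v, ?_⟩⟩
  · rintro ⟨p, i⟩ ⟨q, j⟩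
    have : (i : ℕ) < m + m ∧ (j : ℕ) < m + m := ⟨i.2, j.2⟩
    rw [he, he]
    simp only [hg, zqAdj, arrow, Fin.val_rev]
    simp only [card] at this ⊢
    omega
  · have : (v : ℕ) < m + m := v.2
    simp only [sum_range_succ, range_zero, sum_empty, iterate_zero_apply, iterate_one,
      hg, Fin.val_rev]
    simp only [card] at this ⊢
    omega

end DynkinType

theorem dynkin_root_of_tau_classification (Δ : DynkinType) (hΔ : Δ.Valid)
    (a : ℕ) (ha : 2 ≤ a) :
    (∃ e : (ℤ × Fin Δ.card) ≃ (ℤ × Fin Δ.card),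
      (∀ z w, zqAdj Δ.arrow z w ↔ zqAdj Δ.arrow (e z) (e w)) ∧
      (∀ z : ℤ × Fin Δ.card, e (z.1 - 1, z.2) = ((e z).1 - 1, (e z).2)) ∧
      (∀ z : ℤ × Fin Δ.card, e^[a] z = (z.1 + 1, z.2)))
    ↔ (a = 2 ∧ ∃ n : ℕ, Even n ∧ Δ = DynkinType.A n) := by
  constructor
  · rintro ⟨e, hadj, htau, hpow⟩
    obtain ⟨σ, g, he⟩ := commute_tau_iff_exists_apply_eq.1 htau
    have hσ : Injective σ := injective_of_apply_eq he
    let f : Δ.graph →g Δ.graph := ⟨σ, fromRel_adj_apply_of_apply_eq he hadj⟩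
    have horbit := (iterate_eq_tau_inv_iff he).1 hpow
    have hfree (v : Fin Δ.card) : σ v ≠ v := apply_ne_self_of_sum_iterate_eq_one ha (horbit v).2
    by_cases hA : ∃ n, Δ = DynkinType.A n
    · obtain ⟨n, rfl⟩ := hA
      have hn : 1 ≤ n := hΔ
      let fPath : pathGraph n →g pathGraph n :=
        ⟨σ, fun h => DynkinType.graph_A_adj.1 (f.map_adj (DynkinType.graph_A_adj.2 h))⟩
      have hrev : σ = Fin.rev := (pathGraph_hom_eq_id_or_rev (f := fPath) hσ).resolve_left
        fun h => hfree ⟨0, hn⟩ (congrFun h _)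
      subst hrev
      exact ⟨Fin.rev_involutive.eq_two_of_sum_iterate_eq_one (hfree ⟨0, hn⟩) (horbit _).1
        (horbit _).2, n, Fin.even_of_forall_rev_ne hfree, rfl⟩
    · obtain ⟨b, hb, huniq⟩ := DynkinType.existsUnique_isBranchVertex hΔ (not_exists.1 hA)
      exact (hfree b (huniq _ (hb.map f hσ))).elim
  · rintro ⟨rfl, n, ⟨m, rfl⟩, rfl⟩
    exact DynkinType.exists_zq_sqrt_tau_inv_A m
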